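/- arXiv:2208.13464 — 4 statements merged into one kernel-verified Lean document; each statement's English description precedes it below -/
import Mathlib

section
/- Suppose a bundle B* attains the local MEV of the player at state st. Then the local MEV at the resulting state exec st B* equals 0; precisely, 0 is the greatest element of the set { gain (exec st B*) B' : B' reachable, Valid (exec st B*) B' } — the empty bundle is reachable and valid with gain 0, and every reachable valid bundle at exec st B* has gain at most 0. -/
/-- Execute a bundle (list of transactions) from a state. -/
def exec {T S : Type*} (step : S → T → S) (st : S) (B : List T) : S :=
  List.foldl step st B

/-- The player's gain from executing bundle `B` at state `st`. -/
def gain {T S : Type*} (step : S → T → S) (b : S → ℤ) (st : S) (B : List T) : ℤ :=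
  b (exec step st B) - b st

/-- A bundle is reachable if all of its transactions lie in the player's set `C`. -/
def Reachable {T : Type*} (C : Set T) (B : List T) : Prop :=
  ∀ t ∈ B, t ∈ C

/-!
Executing `B*` and then any reachable bundle `B'` valid at `exec st B*` is the same as executing
the reachable, valid bundle `B* ++ B'` at `st`, and gains add along concatenation. So
`gain st B* + gain (exec st B*) B' = gain st (B* ++ B') ≤ gain st B*`, i.e. `B'` gains at most `0`;
the empty bundle gains exactly `0`.
-/

section Bundles

variable {T S : Type*} (step : S → T → S)

theorem exec_append (st : S) (B B' : List T) :
    exec step st (B ++ B') = exec step (exec step st B) B' :=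
  List.foldl_append

variable (b : S → ℤ)

@[simp]
theorem gain_nil (st : S) : gain step b st [] = 0 :=
  sub_self _

theorem gain_append (st : S) (B B' : List T) :
    gain step b st (B ++ B') = gain step b st B + gain step b (exec step st B) B' := by
  simp only [gain, exec_append]
  ring

end Bundles

theorem Reachable.nil {T : Type*} (C : Set T) : Reachable C [] :=
  List.forall_mem_nil _

theorem Reachable.append {T : Type*} {C : Set T} {B B' : List T}
    (hB : Reachable C B) (hB' : Reachable C B') : Reachable C (B ++ B') :=
  List.forall_mem_append.2 ⟨hB, hB'⟩

/-- If `B*` attains the local MEV of the player at state `st`, then the local MEV at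
the resulting state `exec st B*` equals `0`: `0` is the greatest element of the set of
gains of reachable bundles that are valid at `exec st B*` (the empty bundle being a
witness with gain `0`). -/
theorem local_MEV_zero_after_extraction {T S : Type*} (step : S → T → S) (b : S → ℤ)
    (C : Set T) (Valid : S → List T → Prop)
    (hValidNil : ∀ st : S, Valid st [])
    (hValidApp : ∀ (st : S) (B B' : List T),
      Valid st B → Valid (exec step st B) B' → Valid st (B ++ B'))
    (st : S) (Bstar : List T)
    (hreach : Reachable C Bstar) (hvalid : Valid st Bstar)
    (hmax : ∀ B : List T, Reachable C B → Valid st B →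
      gain step b st B ≤ gain step b st Bstar) :
    IsGreatest {x : ℤ | ∃ B' : List T, Reachable C B' ∧
      Valid (exec step st Bstar) B' ∧ x = gain step b (exec step st Bstar) B'} 0 := by
  refine ⟨⟨[], Reachable.nil C, hValidNil _, (gain_nil step b _).symm⟩, ?_⟩
  rintro _ ⟨B', hreach', hvalid', rfl⟩
  have hconcat := hmax (Bstar ++ B') (hreach.append hreach') (hValidApp st Bstar B' hvalid hvalid')
  rw [gain_append] at hconcat
  linarith
end

section
/- In the star instance with parameters k ≥ 2, m > 0, ε > 0: the set {1, …, k−1} of all bundles other than 0 is feasible with revenue (k−1)·m, and if m + ε ≤ (k−1)·m then the maximum of the revenue over all feasible subsets equals (k−1)·m. -/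
/-- A subset of bundles is feasible if it is conflict-free and fits in the gas limit. -/
def Feasible {n : ℕ} (g : Fin n → ℝ) (conflict : Fin n → Fin n → Prop) (L : ℝ)
    (A : Finset (Fin n)) : Prop :=
  (∀ i ∈ A, ∀ j ∈ A, i ≠ j → ¬ conflict i j) ∧ ∑ i ∈ A, g i ≤ L

/-- The sequencer revenue of a subset of bundles. -/
def revenue {n : ℕ} (r : Fin n → ℝ) (A : Finset (Fin n)) : ℝ :=
  ∑ i ∈ A, r i

/-- In the star instance with parameters `k ≥ 2`, `m > 0`, `ε > 0`, the set of all
bundles other than `0` is feasible with revenue `(k-1)·m`, and if `m + ε ≤ (k-1)·m`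
then the maximum revenue over all feasible subsets equals `(k-1)·m`. -/
theorem star_optimal_revenue (k : ℕ) [NeZero k] (hk : 2 ≤ k)
    (L m ε : ℝ) (hL : 0 < L) (hm : 0 < m) (hε : 0 < ε)
    (g r : Fin k → ℝ)
    (hg : ∀ i, g i = L / k)
    (hr0 : r 0 = m + ε) (hr : ∀ i : Fin k, i ≠ 0 → r i = m)
    (conflict : Fin k → Fin k → Prop)
    (hconf : ∀ i j, conflict i j ↔ (i = 0 ∧ j ≠ 0) ∨ (j = 0 ∧ i ≠ 0)) :
    Feasible g conflict L ({0}ᶜ : Finset (Fin k)) ∧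
    revenue r ({0}ᶜ : Finset (Fin k)) = ((k : ℝ) - 1) * m ∧
    (m + ε ≤ ((k : ℝ) - 1) * m →
      IsGreatest {x : ℝ | ∃ A : Finset (Fin k), Feasible g conflict L A ∧ x = revenue r A}
        (((k : ℝ) - 1) * m)) := by
  have hk0 : (0:ℝ) < (k:ℝ) := by positivity
  have hcard : ({0}ᶜ : Finset (Fin k)).card = k - 1 := by
    rw [Finset.card_compl, Finset.card_singleton, Fintype.card_fin]
  have hcardR : (({0}ᶜ : Finset (Fin k)).card : ℝ) = (k:ℝ) - 1 := by
    rw [hcard, Nat.cast_sub (by omega)]; norm_num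
  have hfeas : Feasible g conflict L ({0}ᶜ : Finset (Fin k)) := by
    constructor
    · intro i hi j hj _ hc
      rw [hconf] at hc
      simp only [Finset.mem_compl, Finset.mem_singleton] at hi hj
      rcases hc with ⟨h, _⟩ | ⟨h, _⟩
      · exact hi h
      · exact hj h
    · calc ∑ i ∈ ({0}ᶜ : Finset (Fin k)), g i
          = ((k:ℝ) - 1) * (L / k) := by
            rw [Finset.sum_congr rfl (fun i _ => hg i), Finset.sum_const, nsmul_eq_mul, hcardR]
        _ ≤ L := by
            rw [mul_div_assoc', div_le_iff₀ hk0]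
            nlinarith
  have hrev : revenue r ({0}ᶜ : Finset (Fin k)) = ((k : ℝ) - 1) * m := by
    unfold revenue
    rw [Finset.sum_congr rfl (fun i hi => hr i (by simpa using hi)), Finset.sum_const,
      nsmul_eq_mul, hcardR]
  refine ⟨hfeas, hrev, fun hle => ⟨⟨{0}ᶜ, hfeas, hrev.symm⟩, ?_⟩⟩
  rintro x ⟨A, ⟨hAc, _⟩, rfl⟩
  by_cases h0 : (0 : Fin k) ∈ A
  · -- A = {0}
    have hA : A = {0} := by
      apply Finset.eq_singleton_iff_unique_mem.mpr
      refine ⟨h0, fun j hj => ?_⟩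
      by_contra hj0
      exact hAc 0 h0 j hj (Ne.symm hj0) ((hconf 0 j).mpr (Or.inl ⟨rfl, hj0⟩))
    rw [hA]
    simpa [revenue, hr0] using hle
  · have : revenue r A = (A.card : ℝ) * m := by
      unfold revenue
      rw [Finset.sum_congr rfl (fun i hi => hr i (fun h => h0 (h ▸ hi))), Finset.sum_const,
        nsmul_eq_mul]
    rw [this]
    have hsub : A ⊆ ({0}ᶜ : Finset (Fin k)) := fun i hi => by
      simp only [Finset.mem_compl, Finset.mem_singleton]
      exact fun h => h0 (h ▸ hi)
    have : (A.card : ℝ) ≤ (k:ℝ) - 1 := by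
      rw [← hcardR]
      exact_mod_cast Finset.card_le_card hsub
    nlinarith
end

section
/- In the star instance with parameters k ≥ 3, m > 0, ε > 0 with m + ε ≤ (k−1)·m: the score of bundle 0 is strictly greater than the score of every other bundle, and the revenue of every feasible subset containing bundle 0, divided by the maximum revenue over all feasible subsets, equals (m + ε) / ((k−1)·m). In particular, any block-building rule that always includes the bundle of strictly maximal score achieves at most the fraction (m + ε)/((k−1)·m) of the optimal revenue on this instance. -/
/-- The score of a bundle: its revenue divided by its gas. -/
noncomputable def score {n : ℕ} (g r : Fin n → ℝ) (i : Fin n) : ℝ :=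
  r i / g i

/-- In the star instance with `k ≥ 3`, `m > 0`, `ε > 0` and `m + ε ≤ (k-1)·m`:
bundle `0` has strictly greater score than every other bundle, and the revenue of
every feasible subset containing bundle `0`, divided by the maximum revenue `M` over
all feasible subsets, equals `(m + ε) / ((k-1)·m)`; in particular, any rule always
including the strictly maximal-score bundle achieves at most that fraction of the
optimal revenue. -/
theorem star_greedy_ratio (k : ℕ) [NeZero k] (hk : 3 ≤ k)
    (L m ε : ℝ) (hL : 0 < L) (hm : 0 < m) (hε : 0 < ε)
    (hmε : m + ε ≤ ((k : ℝ) - 1) * m)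
    (g r : Fin k → ℝ)
    (hg : ∀ i, g i = L / k)
    (hr0 : r 0 = m + ε) (hr : ∀ i : Fin k, i ≠ 0 → r i = m)
    (conflict : Fin k → Fin k → Prop)
    (hconf : ∀ i j, conflict i j ↔ (i = 0 ∧ j ≠ 0) ∨ (j = 0 ∧ i ≠ 0))
    (M : ℝ)
    (hM : IsGreatest
      {x : ℝ | ∃ A : Finset (Fin k), Feasible g conflict L A ∧ x = revenue r A} M) :
    (∀ i : Fin k, i ≠ 0 → score g r i < score g r 0) ∧
    (∀ A : Finset (Fin k), Feasible g conflict L A → (0 : Fin k) ∈ A →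
      revenue r A / M = (m + ε) / (((k : ℝ) - 1) * m) ∧
      revenue r A / M ≤ (m + ε) / (((k : ℝ) - 1) * m)) := by
  have hkR : (3:ℝ) ≤ (k:ℝ) := by exact_mod_cast hk
  have hk1 : 1 ≤ k := by omega
  have hLk : (0:ℝ) < L / k := by positivity
  have hsingle : ∀ A : Finset (Fin k), Feasible g conflict L A → (0:Fin k) ∈ A → A = {0} := by
    intro A hA h0
    apply Finset.eq_singleton_iff_unique_mem.mpr
    refine ⟨h0, fun j hj => ?_⟩
    by_contra hj0
    exact hA.1 0 h0 j hj (Ne.symm hj0) ((hconf 0 j).mpr (Or.inl ⟨rfl, hj0⟩))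
  have hub : ∀ A : Finset (Fin k), Feasible g conflict L A → revenue r A ≤ ((k:ℝ)-1)*m := by
    intro A hA
    by_cases h0 : (0:Fin k) ∈ A
    · rw [hsingle A hA h0]
      simp only [revenue, Finset.sum_singleton, hr0]
      linarith
    · have hrev : revenue r A = (A.card : ℝ) * m := by
        rw [revenue, Finset.sum_congr rfl (fun i hi => hr i (by rintro rfl; exact h0 hi))]
        simp [mul_comm]
      have hsub : A ⊆ Finset.univ.erase 0 := fun i hi =>
        Finset.mem_erase.mpr ⟨by rintro rfl; exact h0 hi, Finset.mem_univ i⟩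
      have hcard : A.card ≤ k - 1 := by
        have := Finset.card_le_card hsub
        simpa [Finset.card_erase_of_mem] using this
      have hcardR : (A.card : ℝ) ≤ (k:ℝ) - 1 := by
        have : (A.card : ℝ) ≤ ((k - 1 : ℕ) : ℝ) := Nat.cast_le.mpr hcard
        rwa [Nat.cast_sub hk1, Nat.cast_one] at this
      rw [hrev]
      exact mul_le_mul_of_nonneg_right hcardR hm.le
  have hmem : (((k:ℝ)-1)*m) ∈ {x : ℝ | ∃ A : Finset (Fin k), Feasible g conflict L A ∧ x = revenue r A} := by
    refine ⟨Finset.univ.erase 0, ⟨?_, ?_⟩, ?_⟩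
    · intro i hi j hj hij hc
      rcases (hconf i j).mp hc with ⟨hi0, _⟩ | ⟨hj0, _⟩
      · exact (Finset.mem_erase.mp hi).1 hi0
      · exact (Finset.mem_erase.mp hj).1 hj0
    · have hsum : ∑ i ∈ Finset.univ.erase 0, g i = ((k:ℝ)-1) * (L/k) := by
        rw [Finset.sum_congr rfl (fun i _ => hg i)]
        simp [Finset.card_erase_of_mem, Nat.cast_sub hk1]
      rw [hsum]
      have hkpos : (0:ℝ) < k := by linarith
      rw [mul_div_assoc', div_le_iff₀ hkpos]
      nlinarith
    · rw [revenue, Finset.sum_congr rfl (fun i hi => hr i (Finset.mem_erase.mp hi).1)]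
      simp [Finset.card_erase_of_mem, Nat.cast_sub hk1, mul_comm]
  have hMval : M = ((k:ℝ)-1)*m := by
    obtain ⟨A, hA, hMA⟩ := hM.1
    exact le_antisymm (hMA ▸ hub A hA) (hM.2 hmem)
  constructor
  · intro i hi
    simp only [score, hg, hr i hi, hr0]
    have : m < m + ε := by linarith
    gcongr
  · intro A hA h0
    have hrev : revenue r A = m + ε := by
      rw [hsingle A hA h0]; simp [revenue, hr0]
    rw [hrev, hMval]
    exact ⟨rfl, le_refl _⟩
end

section
/- For every block gas limit L > 0 and minimal bundle gas g_min > 0 with k := ⌊L / g_min⌋ ≥ 3, and for every δ > 0, there exists a Flashbots block-building instance with gas limit L in which every bundle has gas at least g_min, such that: some bundle i₀ has score strictly greater than the score of every other bundle, every feasible subset containing i₀ has revenue exactly r i₀, and r i₀ divided by the maximum revenue over all feasible subsets is strictly less than 1/(k−1) + δ. Consequently, the infimum over instances of the ratio between the revenue of the greedy (highest-score-first) Flashbots block and the optimal block revenue is at most 1/(⌊L/g_min⌋ − 1). -/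
lemma flashbots_aux (L gmin : ℝ) (hL : 0 < L) (hgmin : 0 < gmin)
    (hk : 3 ≤ ⌊L / gmin⌋₊) (δ : ℝ) (hδ : 0 < δ) :
      ∃ (n : ℕ) (g r : Fin n → ℝ) (conflict : Fin n → Fin n → Prop),
        (∀ i, 0 < g i) ∧
        (∀ i j, conflict i j → conflict j i) ∧
        (∀ i, ¬ conflict i i) ∧
        (∀ i, gmin ≤ g i) ∧
        ∃ (i₀ : Fin n) (M : ℝ),
          (∀ j, j ≠ i₀ → score g r j < score g r i₀) ∧
          (∀ A : Finset (Fin n), Feasible g conflict L A → i₀ ∈ A →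
            revenue r A = r i₀) ∧
          IsGreatest
            {x : ℝ | ∃ A : Finset (Fin n), Feasible g conflict L A ∧ x = revenue r A} M ∧
          (r i₀ = 1 + min δ 1 ∧ M = (⌊L / gmin⌋₊ : ℝ) - 1) := by
  set k := ⌊L / gmin⌋₊ with hkdef
  have hk0 : 0 < k := by omega
  have hkR : (2:ℝ) ≤ (k:ℝ) - 1 := by
    have : (3:ℝ) ≤ (k:ℝ) := by exact_mod_cast hk
    linarith
  have hkpos : (0:ℝ) < (k:ℝ) := by positivity
  have hLk : 0 < L / k := by positivity
  set ε := min δ 1 with hε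
  have hε0 : 0 < ε := lt_min hδ one_pos
  have hε1 : ε ≤ 1 := min_le_right _ _
  refine ⟨k, (fun _ => L / k), (fun i => if i = ⟨0, hk0⟩ then 1 + ε else 1),
    (fun i j => i ≠ j ∧ (i = ⟨0, hk0⟩ ∨ j = ⟨0, hk0⟩)), fun _ => hLk,
    ?_, ?_, ?_, ⟨0, hk0⟩, (k:ℝ) - 1, ?_, ?_, ⟨?_, ?_⟩, ?_, rfl⟩
  · rintro i j ⟨h1, h2⟩; exact ⟨h1.symm, h2.symm⟩
  · rintro i ⟨h1, _⟩; exact h1 rfl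
  · intro i
    have hfloor : (k:ℝ) ≤ L / gmin := Nat.floor_le (by positivity)
    rw [le_div_iff₀ hkpos]
    calc gmin * k = k * gmin := by ring
    _ ≤ (L / gmin) * gmin := by nlinarith
    _ = L := by field_simp
  · intro j hj
    simp only [score, if_neg hj, if_pos rfl]
    simp only [if_true]
    rw [div_lt_div_iff₀ hLk hLk]
    nlinarith
  · -- feasible containing i₀ has revenue r i₀
    rintro A ⟨hconf, -⟩ h0
    have hA : A = {⟨0, hk0⟩} := by
      apply Finset.eq_singleton_iff_unique_mem.mpr
      refine ⟨h0, fun j hj => ?_⟩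
      by_contra hne
      exact hconf j hj _ h0 hne ⟨hne, Or.inr rfl⟩ 
    simp [revenue, hA]
  · -- membership: erase 0 is feasible with revenue k-1
    refine ⟨Finset.univ.erase ⟨0, hk0⟩, ⟨?_, ?_⟩, ?_⟩
    · rintro i hi j hj hne ⟨-, h | h⟩
      · exact (Finset.mem_erase.mp hi).1 h
      · exact (Finset.mem_erase.mp hj).1 h
    · rw [Finset.sum_const, Finset.card_erase_of_mem (Finset.mem_univ _),
        Finset.card_univ, Fintype.card_fin, nsmul_eq_mul]
      have : ((k - 1 : ℕ):ℝ) ≤ (k:ℝ) := by exact_mod_cast Nat.sub_le k 1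
      calc ((k-1:ℕ):ℝ) * (L / k) ≤ (k:ℝ) * (L/k) := by nlinarith
      _ = L := by field_simp
    · rw [revenue, Finset.sum_congr rfl (fun i hi => if_neg (Finset.mem_erase.mp hi).1),
        Finset.sum_const, Finset.card_erase_of_mem (Finset.mem_univ _),
        Finset.card_univ, Fintype.card_fin, nsmul_eq_mul, mul_one]
      rw [Nat.cast_sub hk0]
      push_cast
      ring
  · -- upper bound
    rintro x ⟨A, ⟨hconf, -⟩, rfl⟩
    by_cases h0 : (⟨0, hk0⟩ : Fin k) ∈ A
    · have hA : A = {⟨0, hk0⟩} := by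
        apply Finset.eq_singleton_iff_unique_mem.mpr
        refine ⟨h0, fun j hj => ?_⟩
        by_contra hne
        exact hconf j hj _ h0 hne ⟨hne, Or.inr rfl⟩
      simp only [revenue, hA, Finset.sum_singleton, if_pos rfl, if_true]
      linarith
    · have hsub : A ⊆ Finset.univ.erase ⟨0, hk0⟩ := fun i hi =>
        Finset.mem_erase.mpr ⟨fun h => h0 (by rwa [h] at hi), Finset.mem_univ _⟩
      have hcard : A.card ≤ k - 1 := by
        have := Finset.card_le_card hsub
        rwa [Finset.card_erase_of_mem (Finset.mem_univ _), Finset.card_univ,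
          Fintype.card_fin] at this
      rw [revenue, Finset.sum_congr rfl (fun i hi => if_neg (fun h => h0 (by rwa [h] at hi))),
        Finset.sum_const, nsmul_eq_mul, mul_one]
      have : ((A.card:ℕ):ℝ) ≤ ((k-1:ℕ):ℝ) := by exact_mod_cast hcard
      have h2 : ((k-1:ℕ):ℝ) = (k:ℝ) - 1 := by
        push_cast [Nat.cast_sub hk0]; ring
      linarith
  · simp [if_pos]

lemma flashbots_aux2 (L gmin : ℝ) (hL : 0 < L) (hgmin : 0 < gmin)
    (hk : 3 ≤ ⌊L / gmin⌋₊) (δ : ℝ) (hδ : 0 < δ) :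
      ∃ (n : ℕ) (g r : Fin n → ℝ) (conflict : Fin n → Fin n → Prop),
        (∀ i, 0 < g i) ∧
        (∀ i j, conflict i j → conflict j i) ∧
        (∀ i, ¬ conflict i i) ∧
        (∀ i, gmin ≤ g i) ∧
        ∃ (i₀ : Fin n) (M : ℝ),
          (∀ j, j ≠ i₀ → score g r j < score g r i₀) ∧
          (∀ A : Finset (Fin n), Feasible g conflict L A → i₀ ∈ A →
            revenue r A = r i₀) ∧
          IsGreatest
            {x : ℝ | ∃ A : Finset (Fin n), Feasible g conflict L A ∧ x = revenue r A} M ∧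
          r i₀ / M < 1 / ((⌊L / gmin⌋₊ : ℝ) - 1) + δ := by
  obtain ⟨n, g, r, conflict, h1, h2, h3, h4, i₀, M, h5, h6, h7, hr, hM⟩ :=
    flashbots_aux L gmin hL hgmin hk δ hδ
  refine ⟨n, g, r, conflict, h1, h2, h3, h4, i₀, M, h5, h6, h7, ?_⟩
  have hkR : (2:ℝ) ≤ (⌊L / gmin⌋₊:ℝ) - 1 := by
    have : (3:ℝ) ≤ (⌊L / gmin⌋₊:ℝ) := by exact_mod_cast hk
    linarith
  rw [hr, hM]
  have hε1 : min δ 1 ≤ δ := min_le_left _ _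
  rw [div_lt_iff₀ (by linarith)]
  have : (1:ℝ) / ((⌊L / gmin⌋₊:ℝ) - 1) * ((⌊L / gmin⌋₊:ℝ) - 1) = 1 := by
    field_simp
  nlinarith

/-- For every gas limit `L > 0`, minimal bundle gas `g_min > 0` with
`k := ⌊L / g_min⌋ ≥ 3`, and every `δ > 0`, there is a Flashbots instance (all bundle
gases at least `g_min`) in which some bundle `i₀` has strictly maximal score, every
feasible subset containing `i₀` has revenue exactly `r i₀`, and `r i₀` divided by the
maximum feasible revenue `M` is `< 1/(k-1) + δ`. Consequently the infimum of the
greedy-to-optimal revenue ratio over such instances is at most `1/(⌊L/g_min⌋ - 1)`. -/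
theorem flashbots_greedy_not_optimal (L gmin : ℝ) (hL : 0 < L) (hgmin : 0 < gmin)
    (hk : 3 ≤ ⌊L / gmin⌋₊) :
    (∀ δ : ℝ, 0 < δ →
      ∃ (n : ℕ) (g r : Fin n → ℝ) (conflict : Fin n → Fin n → Prop),
        (∀ i, 0 < g i) ∧
        (∀ i j, conflict i j → conflict j i) ∧
        (∀ i, ¬ conflict i i) ∧
        (∀ i, gmin ≤ g i) ∧
        ∃ (i₀ : Fin n) (M : ℝ),
          (∀ j, j ≠ i₀ → score g r j < score g r i₀) ∧
          (∀ A : Finset (Fin n), Feasible g conflict L A → i₀ ∈ A →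
            revenue r A = r i₀) ∧
          IsGreatest
            {x : ℝ | ∃ A : Finset (Fin n), Feasible g conflict L A ∧ x = revenue r A} M ∧
          r i₀ / M < 1 / ((⌊L / gmin⌋₊ : ℝ) - 1) + δ) ∧
    sInf {x : ℝ | ∃ (n : ℕ) (g r : Fin n → ℝ) (conflict : Fin n → Fin n → Prop),
        (∀ i, 0 < g i) ∧
        (∀ i j, conflict i j → conflict j i) ∧
        (∀ i, ¬ conflict i i) ∧
        (∀ i, gmin ≤ g i) ∧
        ∃ (i₀ : Fin n) (M : ℝ),
          (∀ j, j ≠ i₀ → score g r j < score g r i₀) ∧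
          (∀ A : Finset (Fin n), Feasible g conflict L A → i₀ ∈ A →
            revenue r A = r i₀) ∧
          IsGreatest
            {x : ℝ | ∃ A : Finset (Fin n), Feasible g conflict L A ∧ x = revenue r A} M ∧
          x = r i₀ / M}
      ≤ 1 / ((⌊L / gmin⌋₊ : ℝ) - 1) := by
  refine ⟨fun δ hδ => flashbots_aux2 L gmin hL hgmin hk δ hδ, ?_⟩
  set S : Set ℝ := _
  show sInf S ≤ _
  have hkR : (2:ℝ) ≤ (⌊L / gmin⌋₊:ℝ) - 1 := by
    have : (3:ℝ) ≤ (⌊L / gmin⌋₊:ℝ) := by exact_mod_cast hk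
    linarith
  by_cases hb : BddBelow S
  · apply le_of_forall_pos_le_add
    intro ε hε
    obtain ⟨n, g, r, conflict, h1, h2, h3, h4, i₀, M, h5, h6, h7, h8⟩ :=
      flashbots_aux2 L gmin hL hgmin hk ε hε
    have hmem : r i₀ / M ∈ S :=
      ⟨n, g, r, conflict, h1, h2, h3, h4, i₀, M, h5, h6, h7, rfl⟩
    exact (csInf_le hb hmem).trans h8.le
  · rw [Real.sInf_of_not_bddBelow hb]
    positivity
end
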